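/- Let f_R : ℝ → [-R,R] be the cutoff function f_R(t) = t for |t| ≤ R, f_R(t) = R·sign(t) otherwise, and let A be a self-adjoint N×N matrix, m ∈ ℕ, and m' an even integer with m' ≥ m. Then ‖A − f_R(A)‖_m ≤ R·(tr_N(A^{m'})/R^{m'})^{1/m}, where ‖·‖_m is the m-norm with respect to the normalized trace tr_N and f_R(A) is defined by functional calculus on the eigenvalues of A. -/

import Mathlib

open scoped BigOperators

/-- The cutoff function `f_R : ℝ → [-R, R]`: `f_R(t) = t` for `|t| ≤ R` and
`f_R(t) = R · sign t` otherwise. -/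
noncomputable def cutoff (R t : ℝ) : ℝ := max (-R) (min R t)

/-- `f_R(A)` for a Hermitian matrix `A`, defined by applying `f_R` to the eigenvalues
in a spectral decomposition `A = U diag(λ) U*`. -/
noncomputable def cutoffMat {N : ℕ} {A : Matrix (Fin N) (Fin N) ℂ}
    (hA : A.IsHermitian) (R : ℝ) : Matrix (Fin N) (Fin N) ℂ :=
  (hA.eigenvectorUnitary : Matrix (Fin N) (Fin N) ℂ) *
    Matrix.diagonal (fun i => ((cutoff R (hA.eigenvalues i) : ℝ) : ℂ)) *
    star (hA.eigenvectorUnitary : Matrix (Fin N) (Fin N) ℂ)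

/-- The normalized trace `m`-norm `‖B‖_m = (tr_N(|B|^m))^(1/m)` of an `N × N` matrix,
computed via the eigenvalues of `B * Bᴴ`. -/
noncomputable def traceMNorm (N : ℕ) (B : Matrix (Fin N) (Fin N) ℂ) (m : ℕ) : ℝ :=
  ((1 / (N : ℝ)) *
      ∑ i, ((Matrix.isHermitian_mul_conjTranspose_self B).eigenvalues i) ^ ((m : ℝ) / 2)) ^
    (1 / (m : ℝ))

/-! Everything is diagonal in an eigenbasis of `A`: `A - f_R(A)` is the functional calculus of
`t ↦ t - f_R(t)`, so its `m`-norm is the normalized `ℓ^m`-norm of the numbers `λᵢ - f_R(λᵢ)`,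
while `tr_N(A^{m'})` is the mean of the `λᵢ^{m'}`. The claim thus reduces to the scalar bound
`|t - f_R(t)|^m ≤ R^m (t^{m'} / R^{m'})`: the left side vanishes for `|t| ≤ R`, and otherwise
`|t - f_R(t)| ≤ |t|` and `(|t| / R)^{m'-m} ≥ 1`. -/
open Matrix Polynomial

lemma cutoff_of_abs_le {R t : ℝ} (h : |t| ≤ R) : cutoff R t = t := by
  rw [abs_le] at h
  rw [cutoff, min_eq_right h.2, max_eq_right h.1]

lemma abs_sub_cutoff_of_lt_abs {R t : ℝ} (hR : 0 ≤ R) (h : R < |t|) :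
    |t - cutoff R t| = |t| - R := by
  unfold cutoff
  rcases lt_abs.mp h with ht | ht
  · rw [min_eq_left ht.le, max_eq_right (by linarith), abs_of_pos (by linarith),
      abs_of_pos (by linarith)]
  · rw [min_eq_right (by linarith), max_eq_left (by linarith), abs_of_neg (by linarith),
      abs_of_neg (by linarith)]
    ring

lemma abs_sub_cutoff_pow_le {R t : ℝ} (hR : 0 < R) {m m' : ℕ} (hm : m ≠ 0) (hm' : Even m')
    (hmm' : m ≤ m') : |t - cutoff R t| ^ m ≤ R ^ m * (t ^ m' / R ^ m') := by
  rcases le_or_gt |t| R with ht | ht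
  · rw [cutoff_of_abs_le ht, sub_self, abs_zero, zero_pow hm]
    have := hm'.pow_nonneg t
    positivity
  · obtain ⟨k, rfl⟩ := Nat.exists_eq_add_of_le hmm'
    rw [abs_sub_cutoff_of_lt_abs hR.le ht, ← hm'.pow_abs, mul_div_assoc',
      le_div_iff₀ (by positivity), pow_add, pow_add]
    calc (|t| - R) ^ m * (R ^ m * R ^ k) = R ^ m * ((|t| - R) ^ m * R ^ k) := by ring
      _ ≤ R ^ m * (|t| ^ m * |t| ^ k) := by gcongr; linarith

namespace Matrix.IsHermitian

variable {n 𝕜 : Type*} [Fintype n] [DecidableEq n] [RCLike 𝕜] {A B : Matrix n n 𝕜}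

lemma map_eigenvalues_eq_of_charpoly_eq (hA : A.IsHermitian) {d : n → ℝ}
    (h : A.charpoly = ∏ i, (X - C (d i : 𝕜))) :
    Finset.univ.val.map hA.eigenvalues = Finset.univ.val.map d := by
  have hroots := hA.roots_charpoly_eq_eigenvalues
  rw [h, roots_prod _ _ (by simp [Finset.prod_ne_zero_iff, X_sub_C_ne_zero])] at hroots
  simp only [roots_X_sub_C, Multiset.bind_singleton] at hroots
  refine Multiset.map_injective (RCLike.ofReal_injective (K := 𝕜)) ?_
  simpa only [Multiset.map_map, Function.comp_def] using hroots.symm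

lemma sum_eigenvalues_eq_of_eq_cfc {β : Type*} [AddCommMonoid β] (hA : A.IsHermitian)
    (hB : B.IsHermitian) {f : ℝ → ℝ} (hBA : B = hA.cfc f) (g : ℝ → β) :
    ∑ i, g (hB.eigenvalues i) = ∑ i, g (f (hA.eigenvalues i)) := by
  have hcharpoly : B.charpoly = ∏ i, (X - C (f (hA.eigenvalues i) : 𝕜)) := by
    rw [hBA, ← cfc_eq, charpoly_cfc_eq]
  have hmap := congrArg (fun s => (s.map g).sum) (hB.map_eigenvalues_eq_of_charpoly_eq hcharpoly)
  simpa only [Multiset.map_map, Function.comp_def, Finset.sum_eq_multiset_sum] using hmap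

lemma cfc_id (hA : A.IsHermitian) : hA.cfc id = A :=
  hA.spectral_theorem.symm

lemma cfc_sub_cfc (hA : A.IsHermitian) (f g : ℝ → ℝ) :
    hA.cfc f - hA.cfc g = hA.cfc (fun t => f t - g t) := by
  simp only [IsHermitian.cfc, ← map_sub, diagonal_sub]
  congr 2
  ext i
  simp

lemma cfc_pow (hA : A.IsHermitian) (f : ℝ → ℝ) (k : ℕ) :
    hA.cfc f ^ k = hA.cfc (fun t => f t ^ k) := by
  simp only [IsHermitian.cfc, ← map_pow, diagonal_pow]
  congr 2
  ext i
  simp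

lemma cfc_mul_conjTranspose_self (hA : A.IsHermitian) (f : ℝ → ℝ) :
    hA.cfc f * (hA.cfc f)ᴴ = hA.cfc (fun t => f t ^ 2) := by
  rw [IsHermitian.cfc, ← star_eq_conjTranspose, ← map_star, star_eq_conjTranspose,
    diagonal_conjTranspose, ← map_mul, diagonal_mul_diagonal]
  congr 2
  ext i
  simp [sq]

lemma trace_pow_eq_sum_eigenvalues_pow (hA : A.IsHermitian) (k : ℕ) :
    (A ^ k).trace = ∑ i, ((hA.eigenvalues i ^ k : ℝ) : 𝕜) := by
  have hpow : A ^ k = hA.cfc (· ^ k) := by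
    conv_lhs => rw [← hA.cfc_id]
    exact hA.cfc_pow id k
  rw [(hA.pow k).trace_eq_sum_eigenvalues, sum_eigenvalues_eq_of_eq_cfc hA (hA.pow k) hpow]

end Matrix.IsHermitian

lemma cutoffMat_eq_cfc {N : ℕ} {A : Matrix (Fin N) (Fin N) ℂ} (hA : A.IsHermitian) (R : ℝ) :
    cutoffMat hA R = hA.cfc (cutoff R) :=
  rfl

lemma traceMNorm_cfc {N : ℕ} {A : Matrix (Fin N) (Fin N) ℂ} (hA : A.IsHermitian) (f : ℝ → ℝ)
    (m : ℕ) :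
    traceMNorm N (hA.cfc f) m =
      ((1 / (N : ℝ)) * ∑ i, |f (hA.eigenvalues i)| ^ m) ^ (1 / (m : ℝ)) := by
  have hsq : ∀ x : ℝ, (x ^ 2) ^ ((m : ℝ) / 2) = |x| ^ m := fun x => by
    rw [← sq_abs, ← Real.rpow_natCast, ← Real.rpow_mul (abs_nonneg x), ← Real.rpow_natCast]
    congr 1
    push_cast
    ring
  unfold traceMNorm
  rw [hA.sum_eigenvalues_eq_of_eq_cfc _ (hA.cfc_mul_conjTranspose_self f) (· ^ ((m : ℝ) / 2))]
  simp only [hsq]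

theorem cutoff_traceMNorm_bound_general (N : ℕ) (A : Matrix (Fin N) (Fin N) ℂ)
    (hA : A.IsHermitian) (R : ℝ) (hR : 0 < R) (m m' : ℕ) (hm : 1 ≤ m)
    (hm' : Even m') (hmm' : m ≤ m') :
    traceMNorm N (A - cutoffMat hA R) m ≤
      R * (((1 / (N : ℝ)) * (A ^ m').trace.re) / R ^ m') ^ (1 / (m : ℝ)) := by
  have hm0 : m ≠ 0 := by omega
  set ev := hA.eigenvalues
  rw [cutoffMat_eq_cfc, ← congrArg (· - _) hA.cfc_id, hA.cfc_sub_cfc, traceMNorm_cfc,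
    hA.trace_pow_eq_sum_eigenvalues_pow]
  simp only [id, Complex.re_sum, RCLike.ofReal_eq_complex_ofReal, Complex.ofReal_re]
  have hmean : (1 / (N : ℝ)) * ∑ i, |ev i - cutoff R (ev i)| ^ m ≤
      R ^ m * ((1 / (N : ℝ)) * (∑ i, ev i ^ m') / R ^ m') := by
    calc _ ≤ (1 / (N : ℝ)) * ∑ i, R ^ m * (ev i ^ m' / R ^ m') := by
          gcongr with i
          exact abs_sub_cutoff_pow_le hR hm0 hm' hmm'
      _ = _ := by rw [← Finset.mul_sum, ← Finset.sum_div]; ring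
  have hnonneg : 0 ≤ (1 / (N : ℝ)) * (∑ i, ev i ^ m') / R ^ m' :=
    div_nonneg (mul_nonneg (by positivity) (Finset.sum_nonneg fun i _ => hm'.pow_nonneg _))
      (by positivity)
  calc _ ≤ (R ^ m * ((1 / (N : ℝ)) * (∑ i, ev i ^ m') / R ^ m')) ^ (1 / (m : ℝ)) := by gcongr
    _ = _ := by
      rw [Real.mul_rpow (by positivity) hnonneg, one_div (m : ℝ),
        Real.pow_rpow_inv_natCast hR.le hm0]

/-- If `A` is a self-adjoint `N × N` matrix, `m ≥ 1`, and `m'` is an even integer with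
`m' ≥ m`, then `‖A − f_R(A)‖_m ≤ R · (tr_N(A^{m'}) / R^{m'})^{1/m}`. -/
theorem cutoff_traceMNorm_bound (N : ℕ) (hN : 0 < N) (A : Matrix (Fin N) (Fin N) ℂ)
    (hA : A.IsHermitian) (R : ℝ) (hR : 0 < R) (m m' : ℕ) (hm : 1 ≤ m)
    (hm' : Even m') (hmm' : m ≤ m') :
    traceMNorm N (A - cutoffMat hA R) m ≤
      R * (((1 / (N : ℝ)) * (A ^ m').trace.re) / R ^ m') ^ (1 / (m : ℝ)) :=
  cutoff_traceMNorm_bound_general N A hA R hR m m' hm hm' hmm'
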